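/- Fix r ∉ ℕ with r > 1, set n := ⌊r⌋ + 1 and ρ := r − ⌊r⌋ ∈ (0,1), positions x_j := (j−1)/(2r) for j odd and x_j := 1 − (2n−j)/(2r) for j even (j = 1,…,2n). Let c : [0,1] → [0,1] be differentiable, strictly increasing and strictly concave with c(0) = 0, c(1) = 1, c_j := c(x_j), and fix k ∈ {1,…,n−2}. For a parameter κ ∈ {k−1, k} define d̂^κ_{κ+1} := 0, d̂^κ_j := (1/ρ)·Σ_{i=κ+1}^{j−1}(c_{2i} − c_{2i−1}) for κ+1 < j ≤ n+1, d̄^κ_{κ+1} := 0, d̄^κ_j := (1/(1−ρ))·Σ_{i=κ+1}^{j−1}(c_{2i+1} − c_{2i}) for κ+1 < j ≤ n, and set ẑ_κ(λ) := Σ_{j=κ+1}^{n+1} e^{−λ d̂^κ_j}, z̄_κ(λ) := Σ_{j=κ+1}^{n} e^{−λ d̄^κ_j}. Let λ > 0. If ẑ_{k−1}(λ) = z̄_{k−1}(λ), then ẑ_k(λ) > z̄_k(λ). -/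

import Mathlib

open Set

/-- threshold propagation, Step B of Case IIb. For the
normalizations `ẑ_κ`, `z̄_κ` associated with the supports `S_{k−1}` and `S_k`:
if at some `λ > 0` the equality `ẑ_{k−1}(λ) = z̄_{k−1}(λ)` holds, then
`ẑ_k(λ) > z̄_k(λ)`. -/
theorem stmt16 (r : ℝ) (hrnat : ¬ ∃ k : ℕ, r = (k : ℝ)) (hr1 : 1 < r)
    (n : ℕ) (hn : n = ⌊r⌋₊ + 1) (ρ : ℝ) (hρ : ρ = r - (⌊r⌋₊ : ℝ))
    (x : ℕ → ℝ)
    (hxo : ∀ j, j % 2 = 1 → x j = ((j : ℝ) - 1) / (2 * r))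
    (hxe : ∀ j, j % 2 = 0 → x j = 1 - ((2 * (n : ℝ)) - (j : ℝ)) / (2 * r))
    (c : ℝ → ℝ)
    (hc_diff : DifferentiableOn ℝ c (Icc 0 1))
    (hc_mono : StrictMonoOn c (Icc 0 1))
    (hc_conc : StrictConcaveOn ℝ (Icc 0 1) c)
    (hc_maps : Set.MapsTo c (Icc 0 1) (Icc 0 1))
    (hc0 : c 0 = 0) (hc1 : c 1 = 1)
    (k : ℕ) (hk1 : 1 ≤ k) (hk2 : k ≤ n - 2)
    (dhat dbar : ℕ → ℕ → ℝ)
    (hdhat : ∀ κ j, dhat κ j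
      = (1 / ρ) * ∑ i ∈ Finset.Ico (κ + 1) j, (c (x (2 * i)) - c (x (2 * i - 1))))
    (hdbar : ∀ κ j, dbar κ j
      = (1 / (1 - ρ)) * ∑ i ∈ Finset.Ico (κ + 1) j, (c (x (2 * i + 1)) - c (x (2 * i))))
    (zhat zbar : ℕ → ℝ → ℝ)
    (hzhat : ∀ κ lam, zhat κ lam
      = ∑ j ∈ Finset.Icc (κ + 1) (n + 1), Real.exp (-lam * dhat κ j))
    (hzbar : ∀ κ lam, zbar κ lam
      = ∑ j ∈ Finset.Icc (κ + 1) n, Real.exp (-lam * dbar κ j))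
    (lam : ℝ) (hlam : 0 < lam)
    (heq : zhat (k - 1) lam = zbar (k - 1) lam) :
    zhat k lam > zbar k lam := by
  -- basic numeric facts
  have hr0 : (0:ℝ) < r := by linarith
  have hfle : ((⌊r⌋₊ : ℕ) : ℝ) ≤ r := Nat.floor_le hr0.le
  have hfne : ((⌊r⌋₊ : ℕ) : ℝ) ≠ r := fun h => hrnat ⟨⌊r⌋₊, h.symm⟩
  have hρ0 : 0 < ρ := by rw [hρ]; cases lt_or_eq_of_le hfle with
    | inl h => linarith
    | inr h => exact absurd h hfne
  have hρ1 : ρ < 1 := by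
    have := Nat.lt_floor_add_one r
    rw [hρ]; push_cast at this ⊢; linarith
  have hn3 : 3 ≤ n := by omega
  have hfloor2 : 2 ≤ ⌊r⌋₊ := by omega
  have hkr : (k : ℝ) < r := by
    have : (k : ℝ) ≤ (⌊r⌋₊ : ℝ) - 1 := by
      have : k + 1 ≤ ⌊r⌋₊ := by omega
      have := Nat.cast_le (α := ℝ).2 this
      push_cast at this; linarith
    linarith
  -- the three points
  set p := x (2 * k - 1) with hp
  set q := x (2 * k) with hq
  set s := x (2 * k + 1) with hs
  have hpval : p = ((2 * k : ℝ) - 2) / (2 * r) := by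
    rw [hp, hxo (2 * k - 1) (by omega)]
    have : ((2 * k - 1 : ℕ) : ℝ) = 2 * (k : ℝ) - 1 := by
      have h2 : 1 ≤ 2 * k := by omega
      push_cast [Nat.cast_sub h2]; ring
    rw [this]; ring_nf
  have hqval : q = 1 - (2 * (n : ℝ) - 2 * (k : ℝ)) / (2 * r) := by
    rw [hq, hxe (2 * k) (by omega)]; push_cast; ring_nf
  have hsval : s = (2 * (k : ℝ)) / (2 * r) := by
    rw [hs, hxo (2 * k + 1) (by omega)]; push_cast; ring_nf
  have hnr : (n : ℝ) = (⌊r⌋₊ : ℝ) + 1 := by rw [hn]; push_cast; ring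
  have hqp : q - p = ρ / r := by
    rw [hpval, hqval, hρ, hnr]; field_simp; ring
  have hsq : s - q = (1 - ρ) / r := by
    rw [hsval, hqval, hρ, hnr]; field_simp; ring
  have hp0 : (0:ℝ) ≤ p := by
    rw [hpval]
    apply div_nonneg _ (by linarith)
    have : (1:ℝ) ≤ (k:ℝ) := by exact_mod_cast hk1
    linarith
  have hs1 : s ≤ 1 := by
    rw [hsval]
    rw [div_le_one (by linarith)]
    linarith
  have hpq : p < q := by have : 0 < ρ / r := div_pos hρ0 hr0; linarith
  have hqs : q < s := by have : 0 < (1 - ρ) / r := div_pos (by linarith) hr0; linarith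
  have hpmem : p ∈ Icc (0:ℝ) 1 := ⟨hp0, by linarith⟩
  have hsmem : s ∈ Icc (0:ℝ) 1 := ⟨by linarith, hs1⟩
  -- slope inequality from strict concavity
  have hslope := hc_conc.slope_anti_adjacent hpmem hsmem hpq hqs
  set A := (1 / ρ) * (c q - c p) with hA
  set B := (1 / (1 - ρ)) * (c s - c q) with hB
  have hAB : B < A := by
    rw [hqp, hsq] at hslope
    rw [hA, hB]
    rw [div_div_eq_mul_div, div_div_eq_mul_div] at hslope
    have h1ρ : 0 < 1 - ρ := by linarith
    rw [div_lt_div_iff₀ (by positivity) (by positivity)] at hslope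
    rw [one_div, one_div, inv_mul_eq_div, inv_mul_eq_div,
      div_lt_div_iff₀ h1ρ hρ0]
    nlinarith
  -- recursion for zhat
  have hk1' : k - 1 + 1 = k := by omega
  have hsplit : ∀ f : ℕ → ℝ, ∀ m, k ≤ m →
      ∑ j ∈ Finset.Icc k m, f j = f k + ∑ j ∈ Finset.Icc (k + 1) m, f j := by
    intro f m hm
    rw [Finset.Icc_add_one_left_eq_Ioc, ← Finset.sum_insert (by simp)]
    congr 1
    rw [Finset.Ioc_insert_left hm]
  have hzh : zhat (k - 1) lam = 1 + Real.exp (-lam * A) * zhat k lam := by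
    rw [hzhat, hzhat, hk1', hsplit _ (n + 1) (by omega)]
    have h0 : dhat (k - 1) k = 0 := by
      rw [hdhat, hk1', Finset.Ico_self, Finset.sum_empty, mul_zero]
    rw [h0, mul_zero, Real.exp_zero, Finset.mul_sum]
    congr 1
    apply Finset.sum_congr rfl
    intro j hj
    have hkj : k < j := by
      simp only [Finset.mem_Icc] at hj; omega
    have : dhat (k - 1) j = A + dhat k j := by
      rw [hdhat, hdhat, hk1', Finset.sum_eq_sum_Ico_succ_bot hkj, hA]
      ring
    rw [this, ← Real.exp_add]
    ring_nf
  have hzb : zbar (k - 1) lam = 1 + Real.exp (-lam * B) * zbar k lam := by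
    rw [hzbar, hzbar, hk1', hsplit _ n (by omega)]
    have h0 : dbar (k - 1) k = 0 := by
      rw [hdbar, hk1', Finset.Ico_self, Finset.sum_empty, mul_zero]
    rw [h0, mul_zero, Real.exp_zero, Finset.mul_sum]
    congr 1
    apply Finset.sum_congr rfl
    intro j hj
    have hkj : k < j := by
      simp only [Finset.mem_Icc] at hj; omega
    have : dbar (k - 1) j = B + dbar k j := by
      rw [hdbar, hdbar, hk1', Finset.sum_eq_sum_Ico_succ_bot hkj, hB]
      ring
    rw [this, ← Real.exp_add]
    ring_nf
  -- positivity of zbar k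
  have hzbpos : 0 < zbar k lam := by
    rw [hzbar]
    apply Finset.sum_pos (fun j _ => Real.exp_pos _)
    exact Finset.nonempty_Icc.2 (by omega)
  -- conclude
  have hkey : Real.exp (-lam * A) * zhat k lam = Real.exp (-lam * B) * zbar k lam := by
    rw [hzh, hzb] at heq; linarith
  have h1lt : 1 < Real.exp (lam * (A - B)) := by
    rw [show (1:ℝ) = Real.exp 0 from (Real.exp_zero).symm]
    exact Real.exp_lt_exp.2 (mul_pos hlam (by linarith))
  have hzheq : zhat k lam = Real.exp (lam * (A - B)) * zbar k lam := by
    have h2 : Real.exp (lam * (A - B)) * zbar k lam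
        = Real.exp (lam * A) * (Real.exp (-lam * B) * zbar k lam) := by
      rw [← mul_assoc, ← Real.exp_add]; ring_nf
    rw [h2, ← hkey, ← mul_assoc, ← Real.exp_add]
    norm_num
  have hfin : 1 * zbar k lam < Real.exp (lam * (A - B)) * zbar k lam :=
    mul_lt_mul_of_pos_right h1lt hzbpos
  rw [hzheq]
  linarith
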